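/- For n ≥ 1, let p_n denote the probability that the root of a random binary search tree 𝒯_n with n vertices belongs to the layered independent set of 𝒯_n, and set p_0 := 0. Then, for all n ≥ 1, p_n = (1/n) Σ_{j=0}^{n−1} (1 − p_j)(1 − p_{n−1−j}). -/

import Mathlib

open MeasureTheory ProbabilityTheory Filter Asymptotics

/-- Binary trees with natural number keys. -/
inductive BT : Type
  | nil : BT
  | node : BT → ℕ → BT → BT

/-- Binary search tree insertion: smaller keys go left, others go right. -/
def BT.insert : BT → ℕ → BT
  | .nil, k => .node .nil k .nil
  | .node l x r, k => if k < x then .node (l.insert k) x r else .node l x (r.insert k)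

/-- The binary search tree built by successively inserting the keys of a list. -/
def bstOfList (l : List ℕ) : BT := l.foldl BT.insert .nil

def BT.rootKeys : BT → List ℕ
  | .nil => []
  | .node _ k _ => [k]

/-- The list of (parent, child) pairs of a binary tree. -/
def BT.pairs : BT → List (ℕ × ℕ)
  | .nil => []
  | .node l k r =>
      (l.rootKeys.map fun x => (k, x)) ++ (r.rootKeys.map fun x => (k, x)) ++ l.pairs ++ r.pairs

/-- The binary search tree built from the insertion order `π 0, π 1, …, π (n-1)`,
viewed as a graph on the keys `Fin n`: two keys are adjacent iff one is the parent
of the other in the binary search tree. -/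
def bstGraph (n : ℕ) (π : Equiv.Perm (Fin n)) : SimpleGraph (Fin n) :=
  SimpleGraph.fromRel fun i j =>
    ((i : ℕ), (j : ℕ)) ∈ (bstOfList (List.ofFn fun k => (π k : ℕ))).pairs

instance (n : ℕ) : MeasurableSpace (Equiv.Perm (Fin n)) := ⊤

/-- The uniform probability measure on permutations of `{0, …, n-1}`; the random binary
search tree is built from a uniformly random permutation. -/
noncomputable def bstMeasure (n : ℕ) : Measure (Equiv.Perm (Fin n)) :=
  haveI : Nonempty (Equiv.Perm (Fin n)) := ⟨Equiv.refl _⟩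
  (PMF.uniformOfFintype (Equiv.Perm (Fin n))).toMeasure

/-- The graph associated to a parent function `p` on the vertex set `V`:
`u` and `v` are adjacent iff one is the parent of the other (fixed points give no loops). -/
def parentGraph {V : Type*} (p : V → V) : SimpleGraph V :=
  SimpleGraph.fromRel fun u v => p u = v

/-- The leaves of the forest induced on the vertex subset `S`: members of `S` with no
children inside `S`. -/
def leafIn {V : Type*} (p : V → V) (S : Set V) : Set V :=
  {v | v ∈ S ∧ ∀ u ∈ S, u ≠ v → p u ≠ v}

/-- One step of the layer process: remove from `S` all leaves together with their parents. -/
def layerStep {V : Type*} (p : V → V) (S : Set V) : Set V :=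
  S \ (leafIn p S ∪ {v | v ∈ S ∧ ∃ u ∈ leafIn p S, u ≠ v ∧ p u = v})

/-- `layerFrom p S₀ ℓ` is `T^[ℓ]` for the forest induced on the vertex set `S₀`. -/
def layerFrom {V : Type*} (p : V → V) (S₀ : Set V) : ℕ → Set V
  | 0 => S₀
  | ℓ + 1 => layerStep p (layerFrom p S₀ ℓ)

/-- The layered independent set of the forest induced on the vertex set `S₀`:
the union over all `ℓ` of the leaves of `T^[ℓ]`. -/
def layeredIndepSetOn {V : Type*} (p : V → V) (S₀ : Set V) : Set V :=
  ⋃ ℓ : ℕ, leafIn p (layerFrom p S₀ ℓ)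

/-- The layered independent set of the tree/forest with parent function `p`. -/
def layeredIndepSet {V : Type*} (p : V → V) : Set V :=
  layeredIndepSetOn p Set.univ

/-- The parent function of the binary search tree built from the insertion order `π`:
each non-root key is sent to its parent, the root (and nothing else) is a fixed point. -/
noncomputable def bstParent (n : ℕ) (π : Equiv.Perm (Fin n)) : Fin n → Fin n := fun v =>
  if h : ∃ u : Fin n, ((u : ℕ), (v : ℕ)) ∈ (bstOfList (List.ofFn fun k => (π k : ℕ))).pairs
  then h.choose else v

/-- The probability that the root (the first inserted key `π 0`) of a random binary search
tree with `n` vertices belongs to the layered independent set. -/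
noncomputable def bstRootProb (n : ℕ) : ℝ :=
  ((bstMeasure n) {π : Equiv.Perm (Fin n) | ∃ h : 0 < n,
    π ⟨0, h⟩ ∈ layeredIndepSet (bstParent n π)}).toReal


/-!
In a finite forest a vertex lies in the layered independent set exactly when none of its children
does: a child that is a leaf of `T^[m]` removes its parent at step `m + 1`, and a vertex with no
such child survives until it is itself a leaf. Hence the root of a binary search tree lies in the
set iff the roots of both subtrees do not, a property of the relative order of the keys alone.
Given the root `k`, the insertion orders of the keys below and above `k` are interleaved in one of
`C(m, k)` ways (`shuffle`), each pair of orders occurring equally often; so among the `m!`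
permutations with root `k` the count is `C(m, k) (k! (1 - p_k)) ((m - k)! (1 - p_{m-k}))`, and
summing over `k` gives the recurrence.
-/

section Layers

variable {V : Type*} (p : V → V)

lemma layerStep_subset (S : Set V) : layerStep p S ⊆ S := Set.sdiff_subset

lemma layerFrom_succ_subset (S : Set V) (ℓ : ℕ) : layerFrom p S (ℓ + 1) ⊆ layerFrom p S ℓ :=
  layerStep_subset p _

lemma antitone_layerFrom (S : Set V) : Antitone (layerFrom p S) :=
  antitone_nat_of_succ_le (layerFrom_succ_subset p S)

lemma layerFrom_subset (S : Set V) (ℓ : ℕ) : layerFrom p S ℓ ⊆ S :=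
  antitone_layerFrom p S (Nat.zero_le ℓ)

variable {p} {d : V → ℕ}

lemma leafIn_nonempty (hd : ∀ v, p v ≠ v → d (p v) < d v) {S : Set V} (hS : S.Nonempty)
    (hfin : S.Finite) : (leafIn p S).Nonempty := by
  obtain ⟨v, hvS, hmax⟩ := Set.exists_max_image S d hfin hS
  refine ⟨v, hvS, fun u hu hne hpu => ?_⟩
  have := hd u (hpu ▸ hne.symm)
  rw [hpu] at this
  exact (hmax u hu).not_gt this

lemma exists_layerFrom_eq_empty (hd : ∀ v, p v ≠ v → d (p v) < d v) {S : Set V}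
    (hfin : S.Finite) : ∃ N, layerFrom p S N = ∅ := by
  by_contra! hne
  have hfin' (ℓ : ℕ) : (layerFrom p S ℓ).Finite := hfin.subset (layerFrom_subset p S ℓ)
  have hcard (ℓ : ℕ) : (layerFrom p S ℓ).ncard + ℓ ≤ S.ncard := by
    induction ℓ with
    | zero => rfl
    | succ ℓ ih =>
      obtain ⟨w, hw⟩ := leafIn_nonempty hd (hne ℓ) (hfin' ℓ)
      have hssub : layerFrom p S (ℓ + 1) ⊂ layerFrom p S ℓ :=
        ⟨layerFrom_succ_subset p S ℓ, fun h => (h hw.1).2 (Or.inl hw)⟩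
      have := Set.ncard_lt_ncard hssub (hfin' ℓ)
      omega
  have := (hne S.ncard).ncard_pos (hfin' _)
  have := hcard S.ncard
  omega

theorem mem_layeredIndepSetOn_iff (hd : ∀ v, p v ≠ v → d (p v) < d v) {S : Set V}
    (hfin : S.Finite) {r : V} (hr : r ∈ S) :
    r ∈ layeredIndepSetOn p S ↔ ∀ u ∈ S, u ≠ r → p u = r → u ∉ layeredIndepSetOn p S := by
  simp only [layeredIndepSetOn, Set.mem_iUnion]
  constructor
  · rintro ⟨ℓ, hrℓ⟩ u - hur hpu ⟨m, hum⟩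
    rcases le_or_gt ℓ m with hle | hlt
    · exact hrℓ.2 u (antitone_layerFrom p S hle hum.1) hur hpu
    · have hr' : r ∈ layerStep p (layerFrom p S m) := antitone_layerFrom p S hlt hrℓ.1
      exact hr'.2 (Or.inr ⟨layerStep_subset p _ hr', u, hum, hur, hpu⟩)
  · intro H
    by_contra! hnot
    have hmem (ℓ : ℕ) : r ∈ layerFrom p S ℓ := by
      induction ℓ with
      | zero => exact hr
      | succ ℓ ih =>
        refine ⟨ih, ?_⟩
        rintro (h | ⟨-, u, hu, hur, hpu⟩)
        · exact hnot ℓ h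
        · exact H u (layerFrom_subset p S ℓ hu.1) hur hpu ⟨ℓ, hu⟩
    obtain ⟨N, hN⟩ := exists_layerFrom_eq_empty hd hfin
    simpa [hN] using hmem N

theorem mem_layeredIndepSet_iff [Finite V] (hd : ∀ v, p v ≠ v → d (p v) < d v) (r : V) :
    r ∈ layeredIndepSet p ↔ ∀ u, u ≠ r → p u = r → u ∉ layeredIndepSet p := by
  simpa [layeredIndepSet] using mem_layeredIndepSetOn_iff hd Set.finite_univ (Set.mem_univ r)

end Layers

namespace BT

def keys : BT → List ℕ
  | nil => []
  | node L k R => L.keys ++ k :: R.keys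

def rootInIndep : BT → Bool
  | nil => false
  | node L _ R => !L.rootInIndep && !R.rootInIndep

def map (f : ℕ → ℕ) : BT → BT
  | nil => nil
  | node L k R => node (L.map f) (f k) (R.map f)

inductive Subtree : BT → BT → Prop
  | refl (T : BT) : Subtree T T
  | left {L R T : BT} {k : ℕ} : Subtree (node L k R) T → Subtree L T
  | right {L R T : BT} {k : ℕ} : Subtree (node L k R) T → Subtree R T

lemma mem_pairs_node {L R : BT} {k u v : ℕ} :
    (u, v) ∈ (node L k R).pairs ↔
      u = k ∧ (v ∈ L.rootKeys ∨ v ∈ R.rootKeys) ∨ (u, v) ∈ L.pairs ∨ (u, v) ∈ R.pairs := by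
  simp only [pairs, List.mem_append, List.mem_map, Prod.mk.injEq]
  aesop

lemma mem_keys_of_mem_rootKeys {T : BT} {x : ℕ} (h : x ∈ T.rootKeys) : x ∈ T.keys := by
  cases T <;> simp_all [rootKeys, keys]

lemma mem_keys_of_mem_pairs {T : BT} {u v : ℕ} (h : (u, v) ∈ T.pairs) :
    u ∈ T.keys ∧ v ∈ T.keys := by
  induction T with
  | nil => simp [pairs] at h
  | node L k R ihL ihR =>
    rw [mem_pairs_node] at h
    rcases h with ⟨rfl, hv | hv⟩ | h | h
    · simp [keys, mem_keys_of_mem_rootKeys hv]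
    · simp [keys, mem_keys_of_mem_rootKeys hv]
    · simp [keys, ihL h]
    · simp [keys, ihR h]

lemma child_keys_perm (T : BT) : (T.pairs.map Prod.snd ++ T.rootKeys).Perm T.keys := by
  induction T with
  | nil => rfl
  | node L k R ihL ihR =>
    refine List.Perm.trans (List.perm_iff_count.2 fun a => ?_) (ihL.append (ihR.cons k))
    simp only [pairs, show (node L k R).rootKeys = [k] from rfl, List.map_append, List.map_map,
      Prod.snd_comp_mk, List.map_id_fun, id_eq, List.count_append, List.count_cons, List.count_nil]
    omega

lemma eq_of_mem_pairs {T : BT} (hT : T.keys.Nodup) {u u' v : ℕ} (h : (u, v) ∈ T.pairs)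
    (h' : (u', v) ∈ T.pairs) : u = u' := by
  have hsnd : (T.pairs.map Prod.snd).Nodup :=
    ((child_keys_perm T).nodup_iff.2 hT).sublist (List.sublist_append_left _ _)
  exact congrArg Prod.fst (List.inj_on_of_nodup_map hsnd h h' rfl)

lemma keys_insert_perm (T : BT) (k : ℕ) : (T.insert k).keys.Perm (k :: T.keys) := by
  induction T with
  | nil => rfl
  | node L x R ihL ihR =>
    unfold BT.insert
    split_ifs
    · simpa [keys] using ihL.append_right (x :: R.keys)
    · simpa [keys] using
        ((ihR.cons x).trans (List.Perm.swap k x _)).append_left L.keys |>.trans List.perm_middle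

lemma mem_rootKeys_insert {T : BT} {k v : ℕ} (h : v ∈ (T.insert k).rootKeys) :
    v ∈ T.rootKeys ∨ v = k := by
  cases T with
  | nil => simp_all [BT.insert, rootKeys]
  | node L x R => unfold BT.insert at h; split_ifs at h <;> simp_all [rootKeys]

lemma mem_pairs_insert {T : BT} {k u v : ℕ} (h : (u, v) ∈ (T.insert k).pairs) :
    (u, v) ∈ T.pairs ∨ u ∈ T.keys ∧ v = k := by
  induction T with
  | nil => simp [BT.insert, pairs, rootKeys] at h
  | node L x R ihL ihR =>
    unfold BT.insert at h
    split_ifs at h <;> simp only [mem_pairs_node, keys, List.mem_append, List.mem_cons] at h ⊢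
    · rcases h with ⟨rfl, hv | hv⟩ | h | h
      · rcases mem_rootKeys_insert hv with hv | rfl <;> simp [hv]
      · simp [hv]
      · rcases ihL h with h | ⟨hu, rfl⟩
        · simp [h]
        · simp [hu]
      · simp [h]
    · rcases h with ⟨rfl, hv | hv⟩ | h | h
      · simp [hv]
      · rcases mem_rootKeys_insert hv with hv | rfl <;> simp [hv]
      · simp [h]
      · rcases ihR h with h | ⟨hu, rfl⟩
        · simp [h]
        · simp [hu]

lemma foldl_insert_node (t : List ℕ) (L R : BT) (k : ℕ) :
    t.foldl BT.insert (node L k R) =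
      node ((t.filter (· < k)).foldl BT.insert L) k ((t.filter (¬ · < k)).foldl BT.insert R) := by
  induction t generalizing L R with
  | nil => rfl
  | cons a t ih => by_cases h : a < k <;> simp [BT.insert, h, ih, le_of_not_gt]

lemma keys_foldl_insert_perm (l : List ℕ) (T : BT) :
    (l.foldl BT.insert T).keys.Perm (l ++ T.keys) := by
  induction l generalizing T with
  | nil => rfl
  | cons a l ih =>
    exact (ih _).trans (((T.keys_insert_perm a).append_left l).trans List.perm_middle)

lemma mem_pairs_foldl_insert {l : List ℕ} {T : BT} {u v : ℕ}
    (h : (u, v) ∈ (l.foldl BT.insert T).pairs) :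
    (u, v) ∈ T.pairs ∨ u ∈ T.keys ∧ v ∈ l ∨ [u, v].Sublist l := by
  induction l generalizing T with
  | nil => exact Or.inl h
  | cons a l ih =>
    have hkeys (x : ℕ) : x ∈ (T.insert a).keys ↔ x = a ∨ x ∈ T.keys := by
      simpa using (T.keys_insert_perm a).mem_iff (a := x)
    rcases ih h with h | ⟨hu, hv⟩ | h
    · rcases mem_pairs_insert h with h | ⟨hu, rfl⟩
      · exact Or.inl h
      · exact Or.inr (Or.inl ⟨hu, List.mem_cons_self⟩)
    · rcases (hkeys u).1 hu with rfl | hu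
      · exact Or.inr (Or.inr (List.Sublist.cons_cons _ (List.singleton_sublist.2 hv)))
      · exact Or.inr (Or.inl ⟨hu, List.mem_cons_of_mem _ hv⟩)
    · exact Or.inr (Or.inr (h.cons a))

variable {f : ℕ → ℕ}

lemma map_insert (hf : StrictMono f) (T : BT) (k : ℕ) :
    (T.map f).insert (f k) = (T.insert k).map f := by
  induction T with
  | nil => rfl
  | node L x R ihL ihR => by_cases h : k < x <;> simp [map, BT.insert, hf.lt_iff_lt, h, ihL, ihR]

lemma rootInIndep_map (T : BT) : (T.map f).rootInIndep = T.rootInIndep := by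
  induction T with
  | nil => rfl
  | node L k R ihL ihR => simp [map, rootInIndep, ihL, ihR]

lemma Subtree.keys_sublist {S T : BT} (h : S.Subtree T) : S.keys.Sublist T.keys := by
  induction h with
  | refl => exact List.Sublist.refl _
  | left _ ih => exact (List.sublist_append_left _ _).trans ih
  | right _ ih =>
    exact ((List.sublist_cons_self _ _).trans (List.sublist_append_right _ _)).trans ih

lemma nodup_keys_node {L R : BT} {k : ℕ} (h : (node L k R).keys.Nodup) :
    k ∉ L.keys ∧ k ∉ R.keys ∧ ∀ x ∈ L.keys, x ∉ R.keys := by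
  simp only [keys, List.nodup_append, List.nodup_cons, List.mem_cons] at h
  exact ⟨fun hk => h.2.2 k hk k (Or.inl rfl) rfl, h.2.1.1,
    fun x hx hxR => h.2.2 x hx x (Or.inr hxR) rfl⟩

lemma Subtree.mem_pairs_iff {S T : BT} (h : S.Subtree T) (hT : T.keys.Nodup) {x u : ℕ}
    (hx : x ∈ S.keys) : (x, u) ∈ T.pairs ↔ (x, u) ∈ S.pairs := by
  induction h with
  | refl => rfl
  | @left L R T k hN ih =>
    obtain ⟨hkL, -, hLR⟩ := nodup_keys_node (hN.keys_sublist.nodup hT)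
    rw [ih hT (by simp [keys, hx]), mem_pairs_node]
    have hxk : x ≠ k := fun h => hkL (h ▸ hx)
    have hxR : (x, u) ∉ R.pairs := fun h => hLR x hx (mem_keys_of_mem_pairs h).1
    tauto
  | @right L R T k hN ih =>
    obtain ⟨-, hkR, hLR⟩ := nodup_keys_node (hN.keys_sublist.nodup hT)
    rw [ih hT (by simp [keys, hx]), mem_pairs_node]
    have hxk : x ≠ k := fun h => hkR (h ▸ hx)
    have hxL : (x, u) ∉ L.pairs := fun h => hLR x (mem_keys_of_mem_pairs h).1 hx
    tauto

lemma Subtree.mem_pairs_node_iff {L R T : BT} {x : ℕ} (h : (node L x R).Subtree T)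
    (hT : T.keys.Nodup) {u : ℕ} : (x, u) ∈ T.pairs ↔ u ∈ L.rootKeys ∨ u ∈ R.rootKeys := by
  obtain ⟨hxL, hxR, -⟩ := nodup_keys_node (h.keys_sublist.nodup hT)
  rw [h.mem_pairs_iff hT (by simp [keys]), mem_pairs_node]
  have := fun h => hxL (mem_keys_of_mem_pairs (T := L) (u := x) (v := u) h).1
  have := fun h => hxR (mem_keys_of_mem_pairs (T := R) (u := x) (v := u) h).1
  tauto

end BT

lemma bstOfList_cons (k : ℕ) (t : List ℕ) :
    bstOfList (k :: t) =
      .node (bstOfList (t.filter (· < k))) k (bstOfList (t.filter (¬ · < k))) :=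
  BT.foldl_insert_node t .nil .nil k

lemma keys_bstOfList_perm (l : List ℕ) : (bstOfList l).keys.Perm l := by
  simpa [bstOfList, BT.keys] using BT.keys_foldl_insert_perm l .nil

lemma sublist_of_mem_pairs_bstOfList {l : List ℕ} {u v : ℕ}
    (h : (u, v) ∈ (bstOfList l).pairs) : [u, v].Sublist l := by
  simpa [BT.pairs, BT.keys] using BT.mem_pairs_foldl_insert h

lemma bstOfList_map {f : ℕ → ℕ} (hf : StrictMono f) (l : List ℕ) :
    bstOfList (l.map f) = (bstOfList l).map f := by
  suffices ∀ T : BT, (l.map f).foldl BT.insert (T.map f) = (l.foldl BT.insert T).map f from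
    this .nil
  induction l with
  | nil => exact fun _ => rfl
  | cons a l ih => intro T; simp [BT.map_insert hf, ih]

lemma rootInIndep_bstOfList_map {f : ℕ → ℕ} (hf : StrictMono f) (l : List ℕ) :
    (bstOfList (l.map f)).rootInIndep = (bstOfList l).rootInIndep := by
  rw [bstOfList_map hf, BT.rootInIndep_map]

section PermTree

variable {n : ℕ} (π : Equiv.Perm (Fin n))

def bstOfPerm : BT := bstOfList (List.ofFn fun i => (π i : ℕ))

lemma nodup_ofFn_val_perm : (List.ofFn fun i => (π i : ℕ)).Nodup :=
  List.nodup_ofFn.2 (Fin.val_injective.comp π.injective)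

lemma nodup_keys_bstOfPerm : (bstOfPerm π).keys.Nodup :=
  (keys_bstOfList_perm _).nodup_iff.2 (nodup_ofFn_val_perm π)

lemma mem_keys_bstOfPerm {x : ℕ} : x ∈ (bstOfPerm π).keys ↔ x < n := by
  rw [bstOfPerm, (keys_bstOfList_perm _).mem_iff, List.mem_ofFn]
  exact ⟨by rintro ⟨i, rfl⟩; exact (π i).isLt, fun hx => ⟨π.symm ⟨x, hx⟩, by simp⟩⟩

variable {π}

lemma ne_of_mem_pairs_bstOfPerm {u v : ℕ} (h : (u, v) ∈ (bstOfPerm π).pairs) : u ≠ v := by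
  simpa using (sublist_of_mem_pairs_bstOfList h).nodup (nodup_ofFn_val_perm π)

lemma bstParent_eq_iff {u v : Fin n} (huv : u ≠ v) :
    bstParent n π v = u ↔ ((u : ℕ), (v : ℕ)) ∈ (bstOfPerm π).pairs := by
  unfold bstParent
  split_ifs with hex
  · refine ⟨fun h => h ▸ hex.choose_spec, fun h => Fin.val_injective ?_⟩
    exact BT.eq_of_mem_pairs (nodup_keys_bstOfPerm π) hex.choose_spec h
  · exact ⟨fun h => absurd h huv.symm, fun h => absurd ⟨u, h⟩ hex⟩

lemma symm_bstParent_lt {v : Fin n} (hv : bstParent n π v ≠ v) :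
    π.symm (bstParent n π v) < π.symm v := by
  have hpw : (List.ofFn fun i => (π i : ℕ)).Pairwise
      fun a b => ∀ (ha : a < n) (hb : b < n), π.symm ⟨a, ha⟩ < π.symm ⟨b, hb⟩ :=
    List.pairwise_ofFn.2 fun i j hij _ _ => by simpa using hij
  have hsub := sublist_of_mem_pairs_bstOfList ((bstParent_eq_iff hv).1 rfl)
  exact List.pairwise_pair.1 (hpw.sublist hsub) (bstParent n π v).isLt v.isLt

lemma forall_rootKeys_notMem_iff {S : BT} (hS : S.Subtree (bstOfPerm π)) {X : Set (Fin n)}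
    (h : ∀ {u : Fin n}, (u : ℕ) ∈ S.rootKeys → (u ∈ X ↔ S.rootInIndep = true)) :
    (∀ u : Fin n, (u : ℕ) ∈ S.rootKeys → u ∉ X) ↔ S.rootInIndep = false := by
  cases S with
  | nil => simp [BT.rootKeys, BT.rootInIndep]
  | node L y R =>
    have hy : y < n := (mem_keys_bstOfPerm π).1 (hS.keys_sublist.subset (by simp [BT.keys]))
    have hroot (u : Fin n) : (u : ℕ) ∈ (BT.node L y R).rootKeys ↔ u = ⟨y, hy⟩ := by
      simp [BT.rootKeys, Fin.ext_iff]
    simp only [hroot, forall_eq, h ((hroot _).2 rfl), Bool.not_eq_true]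

theorem mem_layeredIndepSet_bstParent_iff {S : BT} (hS : S.Subtree (bstOfPerm π)) {v : Fin n}
    (hv : (v : ℕ) ∈ S.rootKeys) :
    v ∈ layeredIndepSet (bstParent n π) ↔ S.rootInIndep = true := by
  induction S generalizing v with
  | nil => simp [BT.rootKeys] at hv
  | node L x R ihL ihR =>
    obtain rfl : (v : ℕ) = x := List.mem_singleton.1 hv
    have hchild (u : Fin n) :
        u ≠ v ∧ bstParent n π u = v ↔ (u : ℕ) ∈ L.rootKeys ∨ (u : ℕ) ∈ R.rootKeys := by
      rw [← hS.mem_pairs_node_iff (nodup_keys_bstOfPerm π)]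
      refine ⟨fun h => (bstParent_eq_iff h.1.symm).1 h.2, fun h => ?_⟩
      have hne : v ≠ u := fun h' => ne_of_mem_pairs_bstOfPerm h (congrArg Fin.val h')
      exact ⟨hne.symm, (bstParent_eq_iff hne).2 h⟩
    rw [mem_layeredIndepSet_iff (d := fun v => (π.symm v : ℕ)) fun _ hv => symm_bstParent_lt hv,
      BT.rootInIndep, Bool.and_eq_true, Bool.not_eq_true', Bool.not_eq_true',
      ← forall_rootKeys_notMem_iff hS.left (ihL hS.left),
      ← forall_rootKeys_notMem_iff hS.right (ihR hS.right)]
    simp only [← forall_and, ← or_imp, ← hchild, and_imp]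

theorem root_mem_layeredIndepSet_iff {m : ℕ} (π : Equiv.Perm (Fin (m + 1))) :
    π 0 ∈ layeredIndepSet (bstParent (m + 1) π) ↔ (bstOfPerm π).rootInIndep = true :=
  mem_layeredIndepSet_bstParent_iff (.refl _)
    (by simp [bstOfPerm, List.ofFn_succ, bstOfList_cons, BT.rootKeys])

end PermTree

section RootDecomposition

variable {m : ℕ} (k : Fin (m + 1))

def permSuccAboveEquiv : Equiv.Perm (Fin m) ≃ {π : Equiv.Perm (Fin (m + 1)) // π 0 = k} :=
  ((Equiv.refl _).equivCongr (finSuccAboveEquiv k)).trans <| (Equiv.optionSubtype k).symm.trans <|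
    Equiv.subtypeEquiv ((finSuccEquiv m).symm.equivCongr (Equiv.refl _)) fun e => by simp

lemma permSuccAboveEquiv_apply_zero (σ : Equiv.Perm (Fin m)) :
    (permSuccAboveEquiv k σ).1 0 = k :=
  (permSuccAboveEquiv k σ).2

lemma permSuccAboveEquiv_apply_succ (σ : Equiv.Perm (Fin m)) (i : Fin m) :
    (permSuccAboveEquiv k σ).1 i.succ = k.succAbove (σ i) := by
  simp [permSuccAboveEquiv, Equiv.subtypeEquiv, finSuccAboveEquiv_apply]

lemma Fin.val_succAbove (i : Fin m) :
    (k.succAbove i : ℕ) = if (i : ℕ) < k then (i : ℕ) else i + 1 := by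
  rcases lt_or_ge (i : ℕ) k with h | h
  · rw [Fin.succAbove_of_castSucc_lt _ _ (by simpa [Fin.lt_def] using h)]; simp [h]
  · rw [Fin.succAbove_of_le_castSucc _ _ (by simpa [Fin.le_def] using h)]; simp [h.not_gt]

theorem rootInIndep_bstOfPerm_permSuccAboveEquiv (σ : Equiv.Perm (Fin m)) :
    (bstOfPerm (permSuccAboveEquiv k σ).1).rootInIndep =
      (!(bstOfList ((List.ofFn fun i => (σ i : ℕ)).filter (· < k))).rootInIndep &&
        !(bstOfList ((List.ofFn fun i => (σ i : ℕ)).filter (¬ · < k))).rootInIndep) := by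
  set f : ℕ → ℕ := fun v => if v < (k : ℕ) then v else v + 1
  have hf : StrictMono f := fun a b hab => by simp only [f]; split_ifs <;> omega
  have hlist : (List.ofFn fun i => ((permSuccAboveEquiv k σ).1 i : ℕ)) =
      (k : ℕ) :: (List.ofFn fun i => (σ i : ℕ)).map f := by
    simp [List.ofFn_succ, permSuccAboveEquiv_apply_zero, permSuccAboveEquiv_apply_succ,
      Fin.val_succAbove, f, Function.comp_def]
  have hfilter (q : ℕ → Prop) [DecidablePred q] (hq : ∀ v, q (f v) ↔ q v) (l : List ℕ) :
      (l.map f).filter q = (l.filter q).map f := by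
    rw [List.filter_map]
    congr 2
    funext v
    simp [hq]
  rw [bstOfPerm, hlist, bstOfList_cons, BT.rootInIndep,
    hfilter _ (fun v => by simp only [f]; split_ifs <;> omega),
    hfilter _ (fun v => by simp only [f]; split_ifs <;> omega),
    rootInIndep_bstOfList_map hf, rootInIndep_bstOfList_map hf]

open Finset in
lemma card_filter_apply_zero_eq_and (R : Equiv.Perm (Fin (m + 1)) → Prop) [DecidablePred R] :
    #{π : Equiv.Perm (Fin (m + 1)) | π 0 = k ∧ R π} =
      #{σ : Equiv.Perm (Fin m) | R (permSuccAboveEquiv k σ).1} := by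
  refine card_bij' (fun π hπ => (permSuccAboveEquiv k).symm ⟨π, (mem_filter.1 hπ).2.1⟩)
    (fun σ _ => (permSuccAboveEquiv k σ).1) ?_ ?_ (fun _ _ => by simp) (fun _ _ => by simp)
  · intro π hπ
    simpa using (mem_filter.1 hπ).2.2
  · intro σ hσ
    simpa [permSuccAboveEquiv_apply_zero] using hσ

end RootDecomposition

lemma filter_ofFn_eq_ofFn_orderEmbOfFin {α : Type*} {m j : ℕ} {f : Fin m → α} {p : α → Bool}
    (s : Finset (Fin m)) (hs : ∀ i, i ∈ s ↔ p (f i)) (h : s.card = j) :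
    (List.ofFn f).filter p = List.ofFn fun t => f (s.orderEmbOfFin h t) := by
  have hsort : (List.finRange m).filter (p ∘ f) = s.sort :=
    List.Perm.eq_of_pairwise' ((List.pairwise_le_finRange m).filter _) (s.pairwise_sort _)
      (List.perm_of_nodup_nodup_toFinset_eq ((List.nodup_finRange m).filter _) (s.sort_nodup _)
        (by ext i; simp [hs]))
  rw [List.ofFn_eq_map, List.filter_map, hsort, ← s.listMap_orderEmbOfFin_finRange h,
    List.map_map, ← List.ofFn_eq_map]
  rfl

section Shuffle

variable {m j : ℕ}

lemma card_compl_eq_sub {s : Finset (Fin m)} (hs : s.card = j) : sᶜ.card = m - j := by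
  rw [Finset.card_compl, hs, Fintype.card_fin]

variable (hj : j ≤ m)

/-- The permutation whose values below `j` sit, in the order given by `σ`, at the positions `s`,
and whose values `j + τ t` fill the remaining positions in the order given by `τ`. -/
def shuffle (s : {s : Finset (Fin m) // s.card = j}) (σ : Equiv.Perm (Fin j))
    (τ : Equiv.Perm (Fin (m - j))) : Equiv.Perm (Fin m) :=
  (Equiv.sumCompl (· ∈ s.1)).symm.trans <|
    (Equiv.sumCongr ((s.1.orderIsoOfFin s.2).symm.toEquiv.trans σ)
      ((Equiv.subtypeEquivRight fun _ => Finset.mem_compl.symm).trans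
        ((s.1ᶜ.orderIsoOfFin (card_compl_eq_sub s.2)).symm.toEquiv.trans τ))).trans <|
    finSumFinEquiv.trans (finCongr (Nat.add_sub_cancel' hj))

variable (s : {s : Finset (Fin m) // s.card = j}) (σ : Equiv.Perm (Fin j))
  (τ : Equiv.Perm (Fin (m - j)))

lemma shuffle_apply_of_mem {i : Fin m} (h : i ∈ s.1) :
    (shuffle hj s σ τ i : ℕ) = σ ((s.1.orderIsoOfFin s.2).symm ⟨i, h⟩) := by
  simp [shuffle, Equiv.sumCompl_symm_apply_of_pos h]

lemma shuffle_apply_of_notMem {i : Fin m} (h : i ∉ s.1) :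
    (shuffle hj s σ τ i : ℕ) =
      j + τ ((s.1ᶜ.orderIsoOfFin (card_compl_eq_sub s.2)).symm ⟨i, Finset.mem_compl.2 h⟩) := by
  simp only [shuffle, Equiv.trans_apply, Equiv.sumCompl_symm_apply_of_neg h, Equiv.sumCongr_apply,
    Sum.map_inr, finSumFinEquiv_apply_right, finCongr_apply, Fin.val_cast, Fin.val_natAdd]
  rfl

lemma shuffle_lt_iff (i : Fin m) : (shuffle hj s σ τ i : ℕ) < j ↔ i ∈ s.1 := by
  by_cases h : i ∈ s.1
  · simp [shuffle_apply_of_mem hj s σ τ h, h]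
  · simp [shuffle_apply_of_notMem hj s σ τ h, h]

lemma shuffle_apply_orderEmbOfFin (t : Fin j) :
    (shuffle hj s σ τ (s.1.orderEmbOfFin s.2 t) : ℕ) = σ t := by
  have hmem := s.1.orderEmbOfFin_mem s.2 t
  have h : ⟨_, hmem⟩ = s.1.orderIsoOfFin s.2 t :=
    Subtype.ext (s.1.coe_orderIsoOfFin_apply s.2 t).symm
  rw [shuffle_apply_of_mem hj s σ τ hmem, h, OrderIso.symm_apply_apply]

lemma shuffle_apply_orderEmbOfFin_compl (t : Fin (m - j)) :
    (shuffle hj s σ τ (s.1ᶜ.orderEmbOfFin (card_compl_eq_sub s.2) t) : ℕ) = j + τ t := by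
  have hmem := Finset.mem_compl.1 (s.1ᶜ.orderEmbOfFin_mem (card_compl_eq_sub s.2) t)
  have h : ⟨_, Finset.mem_compl.2 hmem⟩ = s.1ᶜ.orderIsoOfFin (card_compl_eq_sub s.2) t :=
    Subtype.ext (Finset.coe_orderIsoOfFin_apply _ _ t).symm
  rw [shuffle_apply_of_notMem hj s σ τ hmem, h, OrderIso.symm_apply_apply]

lemma filter_lt_ofFn_shuffle :
    (List.ofFn fun i => (shuffle hj s σ τ i : ℕ)).filter (· < j) =
      List.ofFn fun t => (σ t : ℕ) := by
  rw [filter_ofFn_eq_ofFn_orderEmbOfFin s.1 (fun i => by simp [shuffle_lt_iff]) s.2]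
  simp [shuffle_apply_orderEmbOfFin]

lemma filter_not_lt_ofFn_shuffle :
    (List.ofFn fun i => (shuffle hj s σ τ i : ℕ)).filter (¬ · < j) =
      (List.ofFn fun t => (τ t : ℕ)).map (j + ·) := by
  rw [filter_ofFn_eq_ofFn_orderEmbOfFin s.1ᶜ (fun i => by simp [shuffle_lt_iff])
    (card_compl_eq_sub s.2)]
  simp [shuffle_apply_orderEmbOfFin_compl, Function.comp_def]

lemma bijective_shuffle : Function.Bijective fun d : {s : Finset (Fin m) // s.card = j} ×
    Equiv.Perm (Fin j) × Equiv.Perm (Fin (m - j)) => shuffle hj d.1 d.2.1 d.2.2 := by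
  refine (Fintype.bijective_iff_injective_and_card _).2 ⟨?_, ?_⟩
  · rintro ⟨s, σ, τ⟩ ⟨s', σ', τ'⟩ h
    simp only at h
    obtain rfl : s = s' := Subtype.ext <| Finset.ext fun i => by
      rw [← shuffle_lt_iff hj s σ τ, ← shuffle_lt_iff hj s' σ' τ', h]
    have hσ := filter_lt_ofFn_shuffle hj s σ τ
    have hτ := filter_not_lt_ofFn_shuffle hj s σ τ
    rw [h, filter_lt_ofFn_shuffle, List.ofFn_inj] at hσ
    rw [h, filter_not_lt_ofFn_shuffle, (List.map_injective_iff.2 (add_right_injective j)).eq_iff,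
      List.ofFn_inj] at hτ
    obtain rfl : σ = σ' := Equiv.ext fun t => Fin.val_injective (congrFun hσ t).symm
    obtain rfl : τ = τ' := Equiv.ext fun t => Fin.val_injective (congrFun hτ t).symm
    rfl
  · simp only [Fintype.card_prod, Fintype.card_finset_len, Fintype.card_perm, Fintype.card_fin]
    rw [← Nat.choose_mul_factorial_mul_factorial hj, mul_assoc]

end Shuffle

open Finset

theorem card_perm_filter_lt_and_filter_not_lt {m j : ℕ} (hj : j ≤ m) (P Q : List ℕ → Prop)
    [DecidablePred P] [DecidablePred Q] :
    #{π : Equiv.Perm (Fin m) | P ((List.ofFn fun i => (π i : ℕ)).filter (· < j)) ∧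
        Q ((List.ofFn fun i => (π i : ℕ)).filter (¬ · < j))} =
      m.choose j * #{σ : Equiv.Perm (Fin j) | P (List.ofFn fun t => (σ t : ℕ))} *
        #{τ : Equiv.Perm (Fin (m - j)) | Q ((List.ofFn fun t => (τ t : ℕ)).map (j + ·))} := by
  calc _ = #((univ : Finset {s : Finset (Fin m) // s.card = j}) ×ˢ
        ((univ.filter fun σ : Equiv.Perm (Fin j) => P (List.ofFn fun t => (σ t : ℕ))) ×ˢ
          univ.filter fun τ : Equiv.Perm (Fin (m - j)) =>
            Q ((List.ofFn fun t => (τ t : ℕ)).map (j + ·)))) :=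
        (card_equiv (Equiv.ofBijective _ (bijective_shuffle hj)) fun d => by
          simp only [mem_filter, mem_univ, true_and, mem_product, Equiv.ofBijective_apply,
            filter_lt_ofFn_shuffle, filter_not_lt_ofFn_shuffle]).symm
    _ = _ := by
      rw [card_product, card_product, card_univ, Fintype.card_finset_len, Fintype.card_fin,
        mul_assoc]

def rootInIndepCount (n : ℕ) (b : Bool) : ℕ :=
  #{π : Equiv.Perm (Fin n) | (bstOfPerm π).rootInIndep = b}

lemma rootInIndepCount_true_add_false (n : ℕ) :
    rootInIndepCount n true + rootInIndepCount n false = n.factorial := by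
  have := card_filter_add_card_filter_not (s := univ)
    fun π : Equiv.Perm (Fin n) => (bstOfPerm π).rootInIndep = true
  simpa [rootInIndepCount, Fintype.card_perm] using this

lemma rootInIndepCount_zero_true : rootInIndepCount 0 true = 0 := by
  rw [rootInIndepCount, card_eq_zero, filter_eq_empty_iff]
  intro π _
  simp [bstOfPerm, bstOfList, BT.rootInIndep]

theorem rootInIndepCount_succ_true (m : ℕ) :
    rootInIndepCount (m + 1) true = ∑ k ∈ range (m + 1),
      m.choose k * rootInIndepCount k false * rootInIndepCount (m - k) false := by
  rw [rootInIndepCount, card_eq_sum_card_fiberwise (f := fun π => π 0) (t := univ)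
    (fun _ _ => mem_coe.2 (mem_univ _)), ← Fin.sum_univ_eq_sum_range]
  refine sum_congr rfl fun k _ => ?_
  have hmono : StrictMono ((k : ℕ) + ·) := fun _ _ h => Nat.add_lt_add_left h k
  simp_rw [filter_filter, and_comm (a := _ = true), card_filter_apply_zero_eq_and,
    rootInIndep_bstOfPerm_permSuccAboveEquiv, Bool.and_eq_true, Bool.not_eq_true']
  refine (card_perm_filter_lt_and_filter_not_lt (Nat.lt_succ_iff.1 k.isLt)
    (fun l => (bstOfList l).rootInIndep = false)
    (fun l => (bstOfList l).rootInIndep = false)).trans ?_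
  simp_rw [rootInIndep_bstOfList_map hmono]
  rfl

lemma toReal_bstMeasure_finset (n : ℕ) (s : Finset (Equiv.Perm (Fin n))) :
    (bstMeasure n (s : Set (Equiv.Perm (Fin n)))).toReal = #s / n.factorial := by
  have : Nonempty (Equiv.Perm (Fin n)) := ⟨Equiv.refl _⟩
  rw [bstMeasure, PMF.toMeasure_uniformOfFintype_apply _ MeasurableSpace.measurableSet_top]
  simp [Fintype.card_perm]

theorem bstRootProb_eq (n : ℕ) : bstRootProb n = rootInIndepCount n true / n.factorial := by
  cases n with
  | zero => simp [bstRootProb, rootInIndepCount_zero_true]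
  | succ m =>
    have hset : {π : Equiv.Perm (Fin (m + 1)) | ∃ h : 0 < m + 1,
        π ⟨0, h⟩ ∈ layeredIndepSet (bstParent (m + 1) π)} =
        ↑(univ.filter fun π : Equiv.Perm (Fin (m + 1)) => (bstOfPerm π).rootInIndep = true) := by
      ext π
      simpa using root_mem_layeredIndepSet_iff π
    rw [bstRootProb, hset, toReal_bstMeasure_finset, rootInIndepCount]

theorem one_sub_bstRootProb (n : ℕ) :
    1 - bstRootProb n = rootInIndepCount n false / n.factorial := by
  rw [bstRootProb_eq, eq_div_iff (by positivity), sub_mul, div_mul_cancel₀ _ (by positivity),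
    ← rootInIndepCount_true_add_false n]
  push_cast
  ring

/-- The probabilities `pₙ` that the root of a random binary search tree belongs to the
layered independent set satisfy `p₀ = 0` and, for `n ≥ 1`,
`pₙ = (1/n) Σ_{j=0}^{n-1} (1 - pⱼ)(1 - p_{n-1-j})`. -/
theorem bstRootProb_recurrence :
    bstRootProb 0 = 0 ∧
      ∀ n : ℕ, 1 ≤ n →
        bstRootProb n =
          (1 / (n : ℝ)) *
            ∑ j ∈ Finset.range n, (1 - bstRootProb j) * (1 - bstRootProb (n - 1 - j)) := by
  refine ⟨by simp [bstRootProb_eq, rootInIndepCount_zero_true], fun n hn => ?_⟩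
  obtain ⟨m, rfl⟩ := Nat.exists_eq_add_of_le' hn
  rw [bstRootProb_eq, rootInIndepCount_succ_true, mul_sum]
  push_cast
  rw [sum_div]
  refine sum_congr rfl fun k hk => ?_
  have hk : k ≤ m := Nat.lt_succ_iff.1 (mem_range.1 hk)
  rw [one_sub_bstRootProb, one_sub_bstRootProb, Nat.cast_choose ℝ hk, Nat.factorial_succ]
  push_cast
  field_simp
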